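/- arXiv:1304.6893 — 3 statements merged into one kernel-verified Lean document; each statement's English description precedes it below -/
import Mathlib

section
/- Let A be an invertible n×n matrix over a field. If performing dictionary pivot operations at positions (1,σ(1)), (2,σ(2)), …, (n,σ(n)) for some permutation σ (each pivot entry nonzero at the time of pivoting) transforms A into a matrix C, then the matrix B with entries b_{ij} = c_{σ⁻¹(i), σ(j)}, obtained by permuting rows and columns of C according to the pivot pairing, equals A⁻¹. -/
/-- The dictionary pivot operation at position `(p, k)`: the pivot entry is
reciprocated, the pivot row is divided by the pivot, the pivot column is
divided by the negative of the pivot, and the remaining entries are updated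
by the rectangle rule. -/
def dictPivot {n : ℕ} {F : Type*} [Field F]
    (A : Matrix (Fin n) (Fin n) F) (p k : Fin n) : Matrix (Fin n) (Fin n) F :=
  Matrix.of fun i j =>
    if i = p then
      (if j = k then (A p k)⁻¹ else A p j / A p k)
    else
      (if j = k then -(A i k) / A p k else A i j - A i k * A p j / A p k)

theorem inverse_from_dict_pivots {n : ℕ} {F : Type*} [Field F]
    (A : Matrix (Fin n) (Fin n) F) (hA : IsUnit A)
    (σ : Equiv.Perm (Fin n))
    (seq : Fin (n + 1) → Matrix (Fin n) (Fin n) F)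
    (h0 : seq 0 = A)
    (hstep : ∀ t : Fin n,
      seq t.castSucc t (σ t) ≠ 0 ∧
      seq t.succ = dictPivot (seq t.castSucc) t (σ t)) :
    A⁻¹ = Matrix.of fun i j => seq (Fin.last n) (σ.symm i) (σ j) := by
  have hdet : IsUnit A.det := (Matrix.isUnit_iff_isUnit_det A).mp hA
  have hAinv : A * A⁻¹ = 1 := Matrix.mul_nonsing_inv A hdet
  -- The key invariant: after `t` pivots, the matrix expresses the exchanged
  -- linear relations of `y = A x` (with a sign on the exchanged variables).
  have key : ∀ t : Fin (n+1), ∀ x : Fin n → F, ∀ i : Fin n,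
      (if (i : ℕ) < (t : ℕ) then -(x (σ i)) else A.mulVec x i)
      = ∑ j : Fin n, seq t i j *
          (if ((σ.symm j : Fin n) : ℕ) < (t : ℕ) then -(A.mulVec x (σ.symm j)) else x j) := by
    intro t
    induction t using Fin.induction with
    | zero =>
      intro x i
      simp [h0, Matrix.mulVec, dotProduct]
    | succ t ih =>
      intro x i
      obtain ⟨hk, hs⟩ := hstep t
      set M := seq t.castSucc with hM
      set k := σ t with hkdef
      set y := A.mulVec x with hy
      set v : Fin n → F := fun j =>
        if ((σ.symm j : Fin n) : ℕ) < (t : ℕ) then -(y (σ.symm j)) else x j with hv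
      have hsymk : σ.symm k = t := by simp [hkdef]
      -- the pivot row equation from the induction hypothesis
      have E : y t = M t k * x k + ∑ j ∈ Finset.univ.erase k, M t j * v j := by
        have h1 := ih x t
        simp only [Fin.coe_castSucc, lt_irrefl, if_false] at h1
        have h1' : y t = ∑ j : Fin n, M t j * v j := h1
        rw [h1', ← Finset.add_sum_erase Finset.univ _ (Finset.mem_univ k)]
        congr 1
        simp [hv, hsymk]
      -- rewrite the goal coercions
      have hsucc : ((t.succ : Fin (n+1)) : ℕ) = (t : ℕ) + 1 := rfl
      have hvj : ∀ j : Fin n, j ≠ k →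
          ((if ((σ.symm j : Fin n) : ℕ) < (t : ℕ) + 1 then -(y (σ.symm j)) else x j) = v j) := by
        intro j hj
        have hne : σ.symm j ≠ t := by
          intro h
          apply hj
          rw [hkdef, ← h, Equiv.apply_symm_apply]
        have hne' : ((σ.symm j : Fin n) : ℕ) ≠ (t : ℕ) := fun h => hne (Fin.val_injective h)
        have : (((σ.symm j : Fin n) : ℕ) < (t : ℕ) + 1) ↔ (((σ.symm j : Fin n) : ℕ) < (t : ℕ)) := by
          omega
        rw [hv]
        simp only [this]
      have hvk' : (if ((σ.symm k : Fin n) : ℕ) < (t : ℕ) + 1 then -(y (σ.symm k)) else x k)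
          = -(y t) := by
        rw [hsymk]
        simp
      rw [hs]
      simp only [hsucc]
      rw [← Finset.add_sum_erase Finset.univ _ (Finset.mem_univ k)]
      by_cases hit : i = t
      · subst hit
        -- LHS is -(x k)
        have hLHS : (if (i : ℕ) < (i : ℕ) + 1 then -(x (σ i)) else y i) = -(x k) := by
          rw [if_pos (Nat.lt_succ_self _), ← hkdef]
        rw [hLHS]
        have hpk : (dictPivot M i k) i k = (M i k)⁻¹ := by
          simp [dictPivot]
        have hterm : ∀ j ∈ Finset.univ.erase k,
            (dictPivot M i k) i j *
              (if ((σ.symm j : Fin n) : ℕ) < (i : ℕ) + 1 then -(y (σ.symm j)) else x j)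
            = M i j * v j / M i k := by
          intro j hj
          have hjk : j ≠ k := Finset.ne_of_mem_erase hj
          rw [hvj j hjk]
          simp only [dictPivot, Matrix.of_apply, eq_self_iff_true, if_true, if_neg hjk]
          ring
        rw [Finset.sum_congr rfl hterm, hpk, hvk', ← Finset.sum_div, E]
        field_simp
        ring
      · -- LHS unchanged
        have hine : (i : ℕ) ≠ (t : ℕ) := fun h => hit (Fin.val_injective h)
        have hiff : ((i : ℕ) < (t : ℕ) + 1) ↔ ((i : ℕ) < (t : ℕ)) := by omega
        simp only [hiff]
        have Ei : (if (i : ℕ) < (t : ℕ) then -(x (σ i)) else y i)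
            = M i k * x k + ∑ j ∈ Finset.univ.erase k, M i j * v j := by
          have h1 := ih x i
          simp only [Fin.coe_castSucc] at h1
          rw [h1, ← Finset.add_sum_erase Finset.univ _ (Finset.mem_univ k)]
          congr 1
          simp [hv, hsymk]
        rw [Ei]
        have hpk : (dictPivot M t k) i k = -(M i k) / M t k := by
          simp [dictPivot, hit]
        have hterm : ∀ j ∈ Finset.univ.erase k,
            (dictPivot M t k) i j *
              (if ((σ.symm j : Fin n) : ℕ) < (t : ℕ) + 1 then -(y (σ.symm j)) else x j)
            = M i j * v j - M i k * (M t j * v j) / M t k := by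
          intro j hj
          have hjk : j ≠ k := Finset.ne_of_mem_erase hj
          rw [hvj j hjk]
          simp only [dictPivot, Matrix.of_apply, if_neg hit, if_neg hjk]
          ring
        rw [Finset.sum_congr rfl hterm, hpk, hvk', Finset.sum_sub_distrib, ← Finset.sum_div,
          ← Finset.mul_sum, E]
        field_simp
        ring
  -- Now extract the inverse from the invariant at `t = n`.
  ext i j
  have hx := key (Fin.last n) (A⁻¹.mulVec (Pi.single j 1)) (σ.symm i)
  have hyv : A.mulVec (A⁻¹.mulVec (Pi.single j 1)) = Pi.single j 1 := by
    rw [Matrix.mulVec_mulVec, hAinv, Matrix.one_mulVec]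
  rw [hyv] at hx
  have hlast : ((Fin.last n : Fin (n+1)) : ℕ) = n := rfl
  simp only [hlast, Fin.is_lt, if_pos, Equiv.apply_symm_apply] at hx
  have hxi : (A⁻¹.mulVec (Pi.single j 1)) i = A⁻¹ i j := by
    simp [Matrix.mulVec, dotProduct, Pi.single_apply]
  rw [hxi] at hx
  have hsum : ∑ j' : Fin n, seq (Fin.last n) (σ.symm i) j' * -((Pi.single j 1 : Fin n → F) (σ.symm j'))
      = -(seq (Fin.last n) (σ.symm i) (σ j)) := by
    rw [Fintype.sum_eq_single (σ j)]
    · rw [Equiv.symm_apply_apply]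
      norm_num
    · intro j' hj'
      have : σ.symm j' ≠ j := by
        intro h
        apply hj'
        rw [← h, Equiv.apply_symm_apply]
      simp [Pi.single_apply, this]
  rw [hsum] at hx
  have := neg_injective hx
  simpa using this
end

section
/- An n×n matrix A over a field is invertible if and only if there exists a permutation σ of {1,…,n} and a sequence of matrices A = A⁰, A¹, …, Aⁿ such that for each step t, the pivot entry (A^{t})_{t+1, σ(t+1)} is nonzero and A^{t+1} is obtained from A^t by the dictionary pivot at that position. -/
/-!
Read a matrix `M` as the dictionary `w + M z = 0` between basic variables `w` (rows) and
nonbasic variables `z` (columns); pivoting at `(p, k)` exchanges the roles of `w p` and `z k`.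
Start from the dictionary `y + A x = 0`. After pivots at `(s, σ s)` for `s < t`, the current
matrix is a dictionary between `x` and `y` with those coordinates exchanged (`basicVec`,
`nonbasicVec`). After all `n` pivots it reads `x ∘ σ + Aⁿ (y ∘ σ⁻¹) = 0`, so `A x = 0`
forces `x = 0`. Conversely, if `A` is invertible and row `t` of `Aᵗ` vanished on all unused
columns, the dictionary for the solution of `A x = -eₜ` would say `1 = 0` in row `t`; so the
next pivot can always be found.
-/

open Matrix

section Pivot

variable {n : ℕ} {F : Type*} [Field F]

theorem dictPivot_mulVec_update {M : Matrix (Fin n) (Fin n) F} {p k : Fin n} (hpk : M p k ≠ 0)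
    {w z : Fin n → F} (h : w + M *ᵥ z = 0) :
    Function.update w p (z k) + dictPivot M p k *ᵥ Function.update z k (w p) = 0 := by
  have row : ∀ i, w i + ∑ j, M i j * z j = 0 := fun i => congr_fun h i
  funext i
  simp only [Pi.add_apply, mulVec, dotProduct, Pi.zero_apply]
  -- New row `p` is old row `p` divided by `M p k`; new row `i ≠ p` is old row `i` minus
  -- `M i k / M p k` times old row `p`.
  by_cases hip : i = p
  · subst hip
    have hterm : ∀ j, dictPivot M i k i j * Function.update z k (w i) j =
        M i j * z j / M i k + if j = k then w i / M i k - z k else 0 := by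
      intro j
      by_cases hjk : j = k
      · subst hjk
        simp only [dictPivot, of_apply, ↓reduceIte, Function.update_self]
        field_simp; ring
      · simp [dictPivot, hjk, div_mul_eq_mul_div]
    simp only [Finset.sum_congr rfl fun j _ => hterm j, Finset.sum_add_distrib, ← Finset.sum_div,
      Finset.sum_ite_eq', Finset.mem_univ, if_true, Function.update_self]
    linear_combination row i / M i k
  · have hterm : ∀ j, dictPivot M p k i j * Function.update z k (w p) j =
        M i j * z j - M i k / M p k * (M p j * z j) - if j = k then M i k / M p k * w p else 0 := by
      intro j
      by_cases hjk : j = k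
      · subst hjk
        simp only [dictPivot, of_apply, hip, ↓reduceIte, Function.update_self]
        field_simp; ring
      · simp only [dictPivot, of_apply, hip, hjk, ↓reduceIte, ne_eq, not_false_eq_true,
          Function.update_of_ne]
        ring
    simp only [Finset.sum_congr rfl fun j _ => hterm j, Finset.sum_sub_distrib, ← Finset.mul_sum,
      Finset.sum_ite_eq', Finset.mem_univ, if_true, Function.update_of_ne hip]
    linear_combination row i - M i k / M p k * row p

end Pivot

section Dictionary

variable {n : ℕ} {α : Type*}

def basicVec (σ : Equiv.Perm (Fin n)) (t : ℕ) (x y : Fin n → α) : Fin n → α :=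
  fun i => if (i : ℕ) < t then x (σ i) else y i

def nonbasicVec (σ : Equiv.Perm (Fin n)) (t : ℕ) (x y : Fin n → α) : Fin n → α :=
  fun j => if (σ.symm j : ℕ) < t then y (σ.symm j) else x j

@[simp] theorem basicVec_zero (σ : Equiv.Perm (Fin n)) (x y : Fin n → α) :
    basicVec σ 0 x y = y := by
  funext i; simp [basicVec]

@[simp] theorem nonbasicVec_zero (σ : Equiv.Perm (Fin n)) (x y : Fin n → α) :
    nonbasicVec σ 0 x y = x := by
  funext j; simp [nonbasicVec]

theorem basicVec_of_le {σ : Equiv.Perm (Fin n)} {t : ℕ} (ht : n ≤ t) (x y : Fin n → α) :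
    basicVec σ t x y = x ∘ σ := by
  funext i; simp [basicVec, i.isLt.trans_le ht]

theorem nonbasicVec_of_le {σ : Equiv.Perm (Fin n)} {t : ℕ} (ht : n ≤ t) (x y : Fin n → α) :
    nonbasicVec σ t x y = y ∘ σ.symm := by
  funext j; simp [nonbasicVec, (σ.symm j).isLt.trans_le ht]

theorem basicVec_succ (σ : Equiv.Perm (Fin n)) (p : Fin n) (x y : Fin n → α) :
    basicVec σ (p + 1) x y =
      Function.update (basicVec σ p x y) p (nonbasicVec σ p x y (σ p)) := by
  funext i
  rcases eq_or_ne i p with rfl | hip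
  · simp [basicVec, nonbasicVec]
  · have : (i : ℕ) < p + 1 ↔ (i : ℕ) < p := by
      have := Fin.val_ne_of_ne hip; omega
    simp [basicVec, hip, this]

theorem nonbasicVec_succ (σ : Equiv.Perm (Fin n)) (p : Fin n) (x y : Fin n → α) :
    nonbasicVec σ (p + 1) x y =
      Function.update (nonbasicVec σ p x y) (σ p) (basicVec σ p x y p) := by
  funext j
  rcases eq_or_ne j (σ p) with rfl | hjp
  · simp [basicVec, nonbasicVec]
  · have : (σ.symm j : ℕ) < p + 1 ↔ (σ.symm j : ℕ) < p := by
      have := Fin.val_ne_of_ne (σ.symm_apply_eq.not.mpr hjp); omega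
    simp [nonbasicVec, hjp, this]

end Dictionary

section PivotSequence

variable {n : ℕ} {F : Type*} [Field F]

def IsPivotSequence (σ : Equiv.Perm (Fin n)) (seq : Fin (n + 1) → Matrix (Fin n) (Fin n) F)
    (t : ℕ) : Prop :=
  ∀ s : Fin n, (s : ℕ) < t →
    seq s.castSucc s (σ s) ≠ 0 ∧ seq s.succ = dictPivot (seq s.castSucc) s (σ s)

variable {σ : Equiv.Perm (Fin n)} {seq : Fin (n + 1) → Matrix (Fin n) (Fin n) F}

theorem IsPivotSequence.basicVec_add_mulVec_nonbasicVec {t : Fin (n + 1)}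
    (h : IsPivotSequence σ seq t) {x y : Fin n → F} (hxy : y + seq 0 *ᵥ x = 0) :
    basicVec σ t x y + seq t *ᵥ nonbasicVec σ t x y = 0 := by
  induction t using Fin.induction with
  | zero => simpa using hxy
  | succ p ih =>
    obtain ⟨hpivot, hstep⟩ := h p (by simp)
    have hprev := ih fun s hs => h s (by simp only [Fin.val_castSucc, Fin.val_succ] at hs ⊢; omega)
    rw [Fin.val_succ, basicVec_succ, nonbasicVec_succ, hstep]
    exact dictPivot_mulVec_update hpivot hprev

theorem IsPivotSequence.isUnit (h : IsPivotSequence σ seq n) : IsUnit (seq 0) := by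
  rw [isUnit_iff_isUnit_det, isUnit_iff_ne_zero, Ne, ← exists_mulVec_eq_zero_iff]
  rintro ⟨x, hx0, hx⟩
  have hrel := h.basicVec_add_mulVec_nonbasicVec (t := Fin.last n) (x := x) (y := 0)
    (by simp [hx])
  rw [Fin.val_last, basicVec_of_le le_rfl, nonbasicVec_of_le le_rfl] at hrel
  exact hx0 (funext fun j => by simpa using congr_fun hrel (σ.symm j))

theorem IsPivotSequence.exists_pivot (hA : IsUnit (seq 0)) {p : Fin n}
    (h : IsPivotSequence σ seq p) : ∃ k, (p : ℕ) ≤ σ.symm k ∧ seq p.castSucc p k ≠ 0 := by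
  by_contra! hcon
  obtain ⟨x, hx⟩ := mulVec_surjective_iff_isUnit.mpr hA (-Pi.single p 1)
  have hrel := h.basicVec_add_mulVec_nonbasicVec (t := p.castSucc) (x := x) (y := Pi.single p (1 : F))
    (by simp [hx])
  have hrow : (seq p.castSucc *ᵥ nonbasicVec σ p x (Pi.single p (1 : F))) p = 0 := by
    rw [mulVec, dotProduct]
    refine Finset.sum_eq_zero fun j _ => ?_
    by_cases hj : (σ.symm j : ℕ) < p
    · have : σ.symm j ≠ p := Fin.ne_of_lt hj
      simp [nonbasicVec, hj, this]
    · simp [hcon j (not_lt.mp hj)]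
  simpa [basicVec, hrow] using congr_fun hrel p

theorem IsPivotSequence.exists_succ (hA : IsUnit (seq 0)) {p : Fin n}
    (h : IsPivotSequence σ seq p) :
    ∃ (σ' : Equiv.Perm (Fin n)) (seq' : Fin (n + 1) → Matrix (Fin n) (Fin n) F),
      seq' 0 = seq 0 ∧ IsPivotSequence σ' seq' (p + 1) := by
  obtain ⟨k, hk, hpivot⟩ := h.exists_pivot hA
  refine ⟨Equiv.swap (σ p) k * σ, Function.update seq p.succ (dictPivot (seq p.castSucc) p k),
    Function.update_of_ne (Fin.succ_ne_zero p).symm _ _, fun s hs => ?_⟩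
  have hcast : s.castSucc ≠ p.succ := by
    rw [Ne, Fin.ext_iff, Fin.val_castSucc, Fin.val_succ]; omega
  rcases (Nat.lt_succ_iff_lt_or_eq.mp hs) with hsp | hsp
  · have hσs : σ s ≠ σ p := σ.injective.ne (Fin.ne_of_lt hsp)
    have hks : σ s ≠ k := by rintro rfl; rw [σ.symm_apply_apply] at hk; omega
    have hsucc : s.succ ≠ p.succ := (Fin.succ_injective _).ne (Fin.ne_of_lt hsp)
    simpa [Function.update_of_ne hcast, Function.update_of_ne hsucc,
      Equiv.swap_apply_of_ne_of_ne hσs hks] using h s hsp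
  · obtain rfl : s = p := Fin.ext hsp
    simpa [Function.update_of_ne hcast] using hpivot

theorem exists_isPivotSequence {A : Matrix (Fin n) (Fin n) F} (hA : IsUnit A) (t : Fin (n + 1)) :
    ∃ (σ : Equiv.Perm (Fin n)) (seq : Fin (n + 1) → Matrix (Fin n) (Fin n) F),
      seq 0 = A ∧ IsPivotSequence σ seq t := by
  induction t using Fin.induction with
  | zero => exact ⟨1, fun _ => A, rfl, fun s hs => absurd hs (by simp)⟩
  | succ p ih =>
    obtain ⟨σ, seq, rfl, h⟩ := ih
    obtain ⟨σ', seq', h0, h'⟩ := h.exists_succ hA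
    exact ⟨σ', seq', h0, h'⟩

end PivotSequence

theorem isUnit_iff_exists_pivot_sequence {n : ℕ} {F : Type*} [Field F]
    (A : Matrix (Fin n) (Fin n) F) :
    IsUnit A ↔
      ∃ (σ : Equiv.Perm (Fin n)) (seq : Fin (n + 1) → Matrix (Fin n) (Fin n) F),
        seq 0 = A ∧
        ∀ t : Fin n,
          seq t.castSucc t (σ t) ≠ 0 ∧
          seq t.succ = dictPivot (seq t.castSucc) t (σ t) := by
  constructor
  · intro hA
    obtain ⟨σ, seq, h0, h⟩ := exists_isPivotSequence hA (Fin.last n)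
    exact ⟨σ, seq, h0, fun t => h t t.isLt⟩
  · rintro ⟨σ, seq, rfl, h⟩
    exact IsPivotSequence.isUnit (σ := σ) fun t _ => h t
end

section
/- If A is an n×n matrix over a field and, during the pivoting inverse algorithm, some not-yet-pivoted row p has all entries zero in the not-yet-pivoted columns (L = ∅), then A is not invertible. -/
/-!
A dictionary pivot at `(P, K)` rewrites the linear system `y = M x` by exchanging the roles of
`y_P` and `x_K` (with a sign): `dictPivot M P K` is the matrix of the system whose unknowns are
`x` with `x_K` replaced by `-y_P` and whose outputs are `y` with `y_P` replaced by `-x_K`.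
After the pivots on `rows s ↔ cols s`, the current matrix therefore expresses the outputs
(`y = A x` with `y_{rows s}` replaced by `-x_{cols s}`) in terms of the unknowns (`x` with
`x_{cols s}` replaced by `-y_{rows s}`). Row `p` is not pivoted and vanishes outside the
pivoted columns, so it writes `y_p` as a combination of the `y_{rows s}` alone. Hence
`e_p` is not in the range of `A`.
-/

open Function Matrix

theorem dictPivot_mulVec_update_s11 {n : ℕ} {F : Type*} [Field F] (M : Matrix (Fin n) (Fin n) F)
    {P K : Fin n} (hPK : M P K ≠ 0) (u : Fin n → F) :
    dictPivot M P K *ᵥ update u K (-(M *ᵥ u) P) = update (M *ᵥ u) P (-u K) := by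
  set S : Fin n → F := fun i => ∑ j ∈ {K}ᶜ, M i j * u j
  have expand_at_K : ∀ (N : Matrix (Fin n) (Fin n) F) (v : Fin n → F) i,
      (N *ᵥ v) i = N i K * v K + ∑ j ∈ {K}ᶜ, N i j * v j := fun N v i =>
    Fintype.sum_eq_add_sum_compl K _
  have off_pivot : ∀ i, ∑ j ∈ {K}ᶜ, dictPivot M P K i j * update u K (-(M *ᵥ u) P) j =
      if i = P then S P / M P K else S i - M i K / M P K * S P := by
    intro i
    split_ifs with hi
    all_goals
      simp only [S, Finset.sum_div, Finset.mul_sum, ← Finset.sum_sub_distrib]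
      refine Finset.sum_congr rfl fun j hj => ?_
      rw [Finset.mem_compl, Finset.mem_singleton] at hj
      simp only [dictPivot, of_apply, hi, hj, if_true, if_false, update_of_ne hj]
      ring
  funext i
  rw [expand_at_K, off_pivot, expand_at_K M u P]
  by_cases hi : i = P
  · subst hi
    simp only [dictPivot, of_apply, if_true, update_self]
    field_simp
    ring
  · simp only [dictPivot, of_apply, hi, if_true, if_false, update_self, update_of_ne hi,
      expand_at_K M u i]
    field_simp
    ring

theorem Function.Injective.extend_eq_update_extend_castSucc {m : ℕ} {α β : Type*}
    [DecidableEq α] {f : Fin (m + 1) → α} (hf : Injective f) (g : Fin (m + 1) → β)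
    (e : α → β) :
    extend f g e = update (extend (f ∘ Fin.castSucc) (g ∘ Fin.castSucc) e) (f (Fin.last m))
      (g (Fin.last m)) := by
  funext b
  by_cases hlast : b = f (Fin.last m)
  · rw [hlast, hf.extend_apply, update_self]
  rw [update_of_ne hlast]
  by_cases hb : ∃ s, f (Fin.castSucc s) = b
  · obtain ⟨s, rfl⟩ := hb
    exact (hf.extend_apply g e _).trans
      ((hf.comp (Fin.castSucc_injective m)).extend_apply (g ∘ Fin.castSucc) e s).symm
  · rw [extend_apply' (f := f ∘ Fin.castSucc) _ _ _ hb, extend_apply']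
    rintro ⟨s, rfl⟩
    induction s using Fin.lastCases with
    | last => exact hlast rfl
    | cast s => exact hb ⟨s, rfl⟩

theorem extend_mulVec_eq_mulVec_extend_of_dictPivot {n m : ℕ} {F : Type*} [Field F]
    (A : Matrix (Fin n) (Fin n) F) (rows cols : Fin m → Fin n)
    (hrows : Injective rows) (hcols : Injective cols)
    (seq : Fin (m + 1) → Matrix (Fin n) (Fin n) F) (h0 : seq 0 = A)
    (hstep : ∀ t : Fin m,
      seq t.castSucc (rows t) (cols t) ≠ 0 ∧
      seq t.succ = dictPivot (seq t.castSucc) (rows t) (cols t))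
    (x : Fin n → F) :
    extend rows (fun s => -x (cols s)) (A *ᵥ x) =
      seq (Fin.last m) *ᵥ extend cols (fun s => -(A *ᵥ x) (rows s)) x := by
  induction m with
  | zero =>
    have hempty : ∀ (f : Fin 0 → Fin n) (g : Fin 0 → F) (e : Fin n → F), extend f g e = e :=
      fun f g e => funext fun b => extend_apply' g e b fun ⟨s, _⟩ => s.elim0
    rw [hempty, hempty, Fin.last_zero, h0]
  | succ m ih =>
    obtain ⟨hpivot, hlast⟩ := hstep (Fin.last m)
    have hprefix :
        extend (rows ∘ Fin.castSucc) ((fun s => -x (cols s)) ∘ Fin.castSucc) (A *ᵥ x) =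
        seq (Fin.last m).castSucc *ᵥ
          extend (cols ∘ Fin.castSucc) ((fun s => -(A *ᵥ x) (rows s)) ∘ Fin.castSucc) x :=
      ih (rows ∘ Fin.castSucc) (cols ∘ Fin.castSucc)
        (hrows.comp (Fin.castSucc_injective m)) (hcols.comp (Fin.castSucc_injective m))
        (seq ∘ Fin.castSucc) h0
        (fun t => by simpa only [Function.comp_apply, Fin.succ_castSucc] using hstep t.castSucc)
    have fresh : ∀ {f : Fin (m + 1) → Fin n} (hf : Injective f) (g : Fin (m + 1) → F) e,
        extend (f ∘ Fin.castSucc) (g ∘ Fin.castSucc) e (f (Fin.last m)) = e (f (Fin.last m)) :=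
      fun hf g e => extend_apply' _ _ _ fun ⟨s, hs⟩ => (Fin.castSucc_lt_last s).ne (hf hs)
    have hy_pivot : (A *ᵥ x) (rows (Fin.last m)) = (seq (Fin.last m).castSucc *ᵥ
        extend (cols ∘ Fin.castSucc) ((fun s => -(A *ᵥ x) (rows s)) ∘ Fin.castSucc) x)
          (rows (Fin.last m)) := by
      rw [← hprefix, fresh hrows]
    rw [hrows.extend_eq_update_extend_castSucc, hcols.extend_eq_update_extend_castSucc,
      ← Fin.succ_last, hlast, hy_pivot, dictPivot_mulVec_update_s11 _ hpivot, ← hprefix,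
      fresh hcols]

theorem det_eq_zero_of_stuck_row {n m : ℕ} {F : Type*} [Field F]
    (A : Matrix (Fin n) (Fin n) F)
    (rows cols : Fin m → Fin n)
    (hrows : Function.Injective rows) (hcols : Function.Injective cols)
    (seq : Fin (m + 1) → Matrix (Fin n) (Fin n) F)
    (h0 : seq 0 = A)
    (hstep : ∀ t : Fin m,
      seq t.castSucc (rows t) (cols t) ≠ 0 ∧
      seq t.succ = dictPivot (seq t.castSucc) (rows t) (cols t))
    (p : Fin n) (hp : p ∉ Set.range rows)
    (hrow : ∀ k : Fin n, k ∉ Set.range cols → seq (Fin.last m) p k = 0) :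
    A.det = 0 := by
  by_contra hdet
  obtain ⟨x, hx⟩ := mulVec_surjective_iff_isUnit.mpr
    ((isUnit_iff_isUnit_det A).mpr (isUnit_iff_ne_zero.mpr hdet)) (Pi.single p 1)
  have hrow_p := congrFun
    (extend_mulVec_eq_mulVec_extend_of_dictPivot A rows cols hrows hcols seq h0 hstep x) p
  rw [extend_apply' _ _ _ hp, hx, Pi.single_eq_same, mulVec, dotProduct] at hrow_p
  refine one_ne_zero (hrow_p.trans (Finset.sum_eq_zero fun k _ => ?_))
  by_cases hk : k ∈ Set.range cols
  · obtain ⟨s, rfl⟩ := hk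
    rw [hcols.extend_apply, Pi.single_eq_of_ne (fun h => hp ⟨s, h⟩), neg_zero, mul_zero]
  · rw [hrow k hk, zero_mul]
end
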